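/- In a network whose topology is a tree (each participant has at most one sender), every participant's mailbox buffer only ever contains messages from its unique parent; hence the mailbox semantics and the peer-to-peer semantics induce the same sets of executions, and in particular τ(S_mb(N)) = τ(S_p2p(N)). -/
import Mathlib


/-- A message with sender, receiver and payload. -/
structure Msg (P A : Type) where
  sender : P
  receiver : P
  payload : A
deriving DecidableEq

/-- Actions: send `!m` or receive `?m`. -/
inductive Act (P A : Type) where
  | send : Msg P A → Act P A
  | recv : Msg P A → Act P A
deriving DecidableEq

namespace Act
variable {P A : Type}
def msg : Act P A → Msg P A | send m => m | recv m => m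
def isSend : Act P A → Bool | send _ => true | recv _ => false
/-- The active participant of an action. -/
def active : Act P A → P | send m => m.sender | recv m => m.receiver
end Act

section Defs
variable {P A : Type}

/-- Projection onto send actions `w↓_!`. -/
def projOut (w : List (Act P A)) : List (Act P A) := w.filter Act.isSend
/-- Projection onto receive actions `w↓_?`. -/
def projIn (w : List (Act P A)) : List (Act P A) := w.filter (fun a => !a.isSend)
/-- Erase the `!`/`?` marks: `w↓_msg`. -/
def projMsg (w : List (Act P A)) : List (Msg P A) := w.map Act.msg
/-- Projection onto actions in which `p` is active: `w↓_p`. -/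
def projPeer [DecidableEq P] (p : P) (w : List (Act P A)) : List (Act P A) :=
  w.filter (fun a => decide (a.active = p))
/-- Projection onto actions involving only participants in `{p, q}`. -/
def projPQ [DecidableEq P] (p q : P) (w : List (Act P A)) : List (Act P A) :=
  w.filter (fun a =>
    (decide (a.msg.sender = p) || decide (a.msg.sender = q)) &&
    (decide (a.msg.receiver = p) || decide (a.msg.receiver = q)))

/-- A network of communicating automata. -/
structure Network (P A : Type) where
  State : P → Type
  init : ∀ p, State p
  trans : ∀ p, State p → Act P A → State p → Prop
  final : ∀ p, Set (State p)
  Msgs : Set (Msg P A)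

/-- Well-formedness: each automaton only performs actions in which it is active,
on messages of the network. -/
def Network.WF (N : Network P A) : Prop :=
  ∀ p s a s', N.trans p s a s' → a.msg ∈ N.Msgs ∧ a.active = p

/-- The set of participants sending to `p`. -/
def senders (N : Network P A) (p : P) : Set P :=
  {q | ∃ m ∈ N.Msgs, m.sender = q ∧ m.receiver = p}

/-- Directed edge of the topology. -/
def Network.Edge (N : Network P A) (p q : P) : Prop :=
  ∃ m ∈ N.Msgs, m.sender = p ∧ m.receiver = q

/-- The underlying undirected topology graph. -/
def topoGraph (N : Network P A) : SimpleGraph P := SimpleGraph.fromRel N.Edge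

/-- Tree topology: connected, acyclic, and every participant has at most one sender. -/
def TreeTopo (N : Network P A) : Prop :=
  (topoGraph N).IsTree ∧ ∀ p, (senders N p).Subsingleton

/-- Generic multi-step relation labelled by words of actions. -/
inductive Steps {C : Type _} (step : C → Act P A → C → Prop) : C → List (Act P A) → C → Prop where
  | nil (c : C) : Steps step c [] c
  | cons {c c' c'' : C} {a : Act P A} {w : List (Act P A)} :
      step c a c' → Steps step c' w c'' → Steps step c (a :: w) c''

variable [DecidableEq P]

/-! ### Mailbox semantics -/

structure MbConfig (N : Network P A) where
  st : ∀ p, N.State p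
  buf : P → List (Msg P A)

inductive MbStep (N : Network P A) : MbConfig N → Act P A → MbConfig N → Prop where
  | send (c : MbConfig N) (m : Msg P A) (s' : N.State m.sender) :
      N.trans m.sender (c.st m.sender) (.send m) s' →
      MbStep N c (.send m)
        ⟨Function.update c.st m.sender s',
         Function.update c.buf m.receiver (c.buf m.receiver ++ [m])⟩
  | recv (c : MbConfig N) (m : Msg P A) (s' : N.State m.receiver) (rest : List (Msg P A)) :
      N.trans m.receiver (c.st m.receiver) (.recv m) s' →
      c.buf m.receiver = m :: rest →
      MbStep N c (.recv m)
        ⟨Function.update c.st m.receiver s',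
         Function.update c.buf m.receiver rest⟩

def MbInit (N : Network P A) : MbConfig N := ⟨N.init, fun _ => []⟩
def MbFinal (N : Network P A) (c : MbConfig N) : Prop := ∀ p, c.st p ∈ N.final p
def MbReachable (N : Network P A) (c : MbConfig N) : Prop :=
  ∃ w, Steps (MbStep N) (MbInit N) w c
def MbExecs (N : Network P A) : Set (List (Act P A)) :=
  {w | ∃ c, Steps (MbStep N) (MbInit N) w c ∧ MbFinal N c}
def MbTraces (N : Network P A) : Set (List (Act P A)) := projOut '' MbExecs N

/-! ### Peer-to-peer semantics -/

structure P2pConfig (N : Network P A) where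
  st : ∀ p, N.State p
  buf : P → P → List (Msg P A)

inductive P2pStep (N : Network P A) : P2pConfig N → Act P A → P2pConfig N → Prop where
  | send (c : P2pConfig N) (m : Msg P A) (s' : N.State m.sender) :
      N.trans m.sender (c.st m.sender) (.send m) s' →
      P2pStep N c (.send m)
        ⟨Function.update c.st m.sender s',
         Function.update c.buf m.sender
           (Function.update (c.buf m.sender) m.receiver (c.buf m.sender m.receiver ++ [m]))⟩
  | recv (c : P2pConfig N) (m : Msg P A) (s' : N.State m.receiver) (rest : List (Msg P A)) :
      N.trans m.receiver (c.st m.receiver) (.recv m) s' →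
      c.buf m.sender m.receiver = m :: rest →
      P2pStep N c (.recv m)
        ⟨Function.update c.st m.receiver s',
         Function.update c.buf m.sender (Function.update (c.buf m.sender) m.receiver rest)⟩

def P2pInit (N : Network P A) : P2pConfig N := ⟨N.init, fun _ _ => []⟩
def P2pExecs (N : Network P A) : Set (List (Act P A)) :=
  {w | ∃ c, Steps (P2pStep N) (P2pInit N) w c ∧ ∀ p, c.st p ∈ N.final p}
def P2pTraces (N : Network P A) : Set (List (Act P A)) := projOut '' P2pExecs N

/-! ### Synchronous semantics -/

inductive SyncStep (N : Network P A) : (∀ p, N.State p) → Act P A → (∀ p, N.State p) → Prop where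
  | comm (st : ∀ p, N.State p) (m : Msg P A) (s1 : N.State m.sender) (s2 : N.State m.receiver) :
      N.trans m.sender (st m.sender) (.send m) s1 →
      N.trans m.receiver (st m.receiver) (.recv m) s2 →
      SyncStep N st (.send m)
        (Function.update (Function.update st m.sender s1) m.receiver s2)

def SyncExecs (N : Network P A) : Set (List (Act P A)) :=
  {w | ∃ st, Steps (SyncStep N) N.init w st ∧ ∀ p, st p ∈ N.final p}
def SyncTraces (N : Network P A) : Set (List (Act P A)) := projOut '' SyncExecs N

/-! ### Local and influenced languages -/

inductive LocalPath (N : Network P A) (p : P) : N.State p → List (Act P A) → N.State p → Prop where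
  | nil (s : N.State p) : LocalPath N p s [] s
  | cons {s s' s'' : N.State p} {a : Act P A} {w : List (Act P A)} :
      N.trans p s a s' → LocalPath N p s' w s'' → LocalPath N p s (a :: w) s''

/-- The language `L(A_p)` of the automaton of participant `p`. -/
def LocalLang (N : Network P A) (p : P) : Set (List (Act P A)) :=
  {w | ∃ s, LocalPath N p (N.init p) w s ∧ s ∈ N.final p}

/-- `L` is the family of influenced languages `L_T(A_p)` of a tree-topology network. -/
def IsInfluenced (N : Network P A) (L : P → Set (List (Act P A))) : Prop :=
  (∀ p, senders N p = ∅ → L p = LocalLang N p) ∧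
  (∀ p q, senders N p = {q} →
    L p = {w ∈ LocalLang N p | ∃ v ∈ L q, projMsg (projIn w) = projMsg (projOut v)})

/-! ### Shuffles -/

/-- One swap replacing an adjacent `!x ?y` by `?y !x`. -/
inductive SwapStep : List (Act P A) → List (Act P A) → Prop where
  | swap (u v : List (Act P A)) (x y : Msg P A) :
      SwapStep (u ++ Act.send x :: Act.recv y :: v) (u ++ Act.recv y :: Act.send x :: v)

/-- `w' ⋈_? w`: `w'` is a valid input shuffle of `w`. -/
def ValidShuffle (w' w : List (Act P A)) : Prop := Relation.ReflTransGen SwapStep w w'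

/-- The shuffled language `L_⋈(p)` of a language. -/
def ShuffleLang (Lp : Set (List (Act P A))) : Set (List (Act P A)) :=
  {w' | ∃ w ∈ Lp, ValidShuffle w' w}

/-- Insert after each send action its matching receive action. -/
def withRecvs (w : List (Act P A)) : List (Act P A) :=
  w.flatMap fun a => match a with
    | .send m => [.send m, .recv m]
    | .recv m => [.recv m]

end Defs


section Bisim
variable {P A : Type} [DecidableEq P] {N : Network P A}

/-- Bisimulation relation between mailbox and p2p configurations. -/
def MbP2pInv (N : Network P A) [DecidableEq P] (c : MbConfig N) (c' : P2pConfig N) : Prop :=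
  c.st = c'.st ∧
  (∀ p, ∀ m ∈ c.buf p, m.receiver = p ∧ m.sender ∈ senders N p) ∧
  (∀ q p, c'.buf q p = (c.buf p).filter (fun m => decide (m.sender = q)))

lemma filter_sender_self {q : P} {l : List (Msg P A)}
    (h : ∀ m ∈ l, m.sender = q) :
    l.filter (fun m => decide (m.sender = q)) = l := by
  apply List.filter_eq_self.2
  intro m hm; simpa using h m hm

lemma mbP2pInv_init : MbP2pInv N (MbInit N) (P2pInit N) := by
  refine ⟨rfl, ?_, ?_⟩ <;> simp [MbInit, P2pInit]

lemma step_fwd (hWF : N.WF) (hts : ∀ p, (senders N p).Subsingleton)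
    {c d : MbConfig N} {c' : P2pConfig N} {a : Act P A}
    (hinv : MbP2pInv N c c') (h : MbStep N c a d) :
    ∃ d', P2pStep N c' a d' ∧ MbP2pInv N d d' := by
  obtain ⟨hst, hbuf, hrel⟩ := hinv
  cases h with
  | send m s' htr =>
    have hmsg : m ∈ N.Msgs := (hWF _ _ _ _ htr).1
    refine ⟨_, P2pStep.send c' m s' (hst ▸ htr), ?_, ?_, ?_⟩
    · simp [hst]
    · intro p x hx
      simp only [Function.update_apply] at hx
      by_cases hp : p = m.receiver
      · rw [if_pos hp] at hx
        subst hp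
        rcases List.mem_append.1 hx with hx | hx
        · exact hbuf _ x hx
        · rw [List.mem_singleton] at hx
          rw [hx]
          exact ⟨rfl, m, hmsg, rfl, rfl⟩
      · rw [if_neg hp] at hx
        exact hbuf _ x hx
    · intro q p
      simp only [Function.update_apply]
      by_cases hq : q = m.sender <;> by_cases hp : p = m.receiver
      · subst hq; subst hp
        simp [hrel, List.filter_append]
      · subst hq
        simp [hp, hrel]
      · subst hp
        simp [hq, hrel, List.filter_append, Ne.symm hq]
      · simp [hq, hp, hrel]
  | recv m s' rest htr hb =>
    have hmsg : m ∈ N.Msgs := (hWF _ _ _ _ htr).1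
    have hsend : m.sender ∈ senders N m.receiver := ⟨m, hmsg, rfl, rfl⟩
    have hall : ∀ x ∈ c.buf m.receiver, x.sender = m.sender := by
      intro x hx
      have hx' := hbuf _ x hx
      exact (hts m.receiver) (hx'.1 ▸ hx'.2) hsend
    have hallrest : ∀ x ∈ rest, x.sender = m.sender := by
      intro x hx; exact hall x (by rw [hb]; exact List.mem_cons_of_mem _ hx)
    have hbuf' : c'.buf m.sender m.receiver = m :: rest := by
      rw [hrel, filter_sender_self hall]; exact hb
    refine ⟨_, P2pStep.recv c' m s' rest (hst ▸ htr) hbuf', ?_, ?_, ?_⟩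
    · simp [hst]
    · intro p x hx
      simp only [Function.update_apply] at hx
      by_cases hp : p = m.receiver
      · rw [if_pos hp] at hx
        subst hp
        exact hbuf _ x (by rw [hb]; exact List.mem_cons_of_mem _ hx)
      · rw [if_neg hp] at hx
        exact hbuf _ x hx
    · intro q p
      simp only [Function.update_apply]
      by_cases hq : q = m.sender <;> by_cases hp : p = m.receiver
      · subst hq; subst hp
        simp [filter_sender_self hallrest]
      · subst hq
        simp [hp, hrel]
      · subst hp
        have hrest2 : rest.filter (fun x => decide (x.sender = q)) = [] :=
          List.filter_eq_nil_iff.2 (fun x hx => by simp [hallrest x hx, Ne.symm hq])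
        simp [hq, hrel, hb, List.filter_cons, Ne.symm hq, hrest2]
      · simp [hq, hp, hrel]

lemma step_bwd (hWF : N.WF) (hts : ∀ p, (senders N p).Subsingleton)
    {c : MbConfig N} {c' d' : P2pConfig N} {a : Act P A}
    (hinv : MbP2pInv N c c') (h : P2pStep N c' a d') :
    ∃ d, MbStep N c a d ∧ MbP2pInv N d d' := by
  obtain ⟨hst, hbuf, hrel⟩ := hinv
  cases h with
  | send m s' htr =>
    have htr' : N.trans m.sender (c.st m.sender) (.send m) s' := hst ▸ htr
    have hmsg : m ∈ N.Msgs := (hWF _ _ _ _ htr).1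
    refine ⟨_, MbStep.send c m s' htr', ?_, ?_, ?_⟩
    · simp [hst]
    · intro p x hx
      simp only [Function.update_apply] at hx
      by_cases hp : p = m.receiver
      · rw [if_pos hp] at hx
        subst hp
        rcases List.mem_append.1 hx with hx | hx
        · exact hbuf _ x hx
        · rw [List.mem_singleton] at hx
          rw [hx]
          exact ⟨rfl, m, hmsg, rfl, rfl⟩
      · rw [if_neg hp] at hx
        exact hbuf _ x hx
    · intro q p
      simp only [Function.update_apply]
      by_cases hq : q = m.sender <;> by_cases hp : p = m.receiver
      · subst hq; subst hp
        simp [hrel, List.filter_append]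
      · subst hq
        simp [hp, hrel]
      · subst hp
        simp [hq, hrel, List.filter_append, Ne.symm hq]
      · simp [hq, hp, hrel]
  | recv m s' rest htr hb =>
    have htr' : N.trans m.receiver (c.st m.receiver) (.recv m) s' := hst ▸ htr
    have hmsg : m ∈ N.Msgs := (hWF _ _ _ _ htr).1
    have hsend : m.sender ∈ senders N m.receiver := ⟨m, hmsg, rfl, rfl⟩
    have hall : ∀ x ∈ c.buf m.receiver, x.sender = m.sender := by
      intro x hx
      have hx' := hbuf _ x hx
      exact (hts m.receiver) (hx'.1 ▸ hx'.2) hsend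
    have hmb : c.buf m.receiver = m :: rest := by
      rw [← filter_sender_self hall, ← hrel, hb]
    have hallrest : ∀ x ∈ rest, x.sender = m.sender := by
      intro x hx; exact hall x (by rw [hmb]; exact List.mem_cons_of_mem _ hx)
    refine ⟨_, MbStep.recv c m s' rest htr' hmb, ?_, ?_, ?_⟩
    · simp [hst]
    · intro p x hx
      simp only [Function.update_apply] at hx
      by_cases hp : p = m.receiver
      · rw [if_pos hp] at hx
        subst hp
        exact hbuf _ x (by rw [hmb]; exact List.mem_cons_of_mem _ hx)
      · rw [if_neg hp] at hx
        exact hbuf _ x hx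
    · intro q p
      simp only [Function.update_apply]
      by_cases hq : q = m.sender <;> by_cases hp : p = m.receiver
      · subst hq; subst hp
        simp [filter_sender_self hallrest]
      · subst hq
        simp [hp, hrel]
      · subst hp
        have hrest2 : rest.filter (fun x => decide (x.sender = q)) = [] :=
          List.filter_eq_nil_iff.2 (fun x hx => by simp [hallrest x hx, Ne.symm hq])
        simp [hq, hrel, hmb, List.filter_cons, Ne.symm hq, hrest2]
      · simp [hq, hp, hrel]

lemma steps_fwd (hWF : N.WF) (hts : ∀ p, (senders N p).Subsingleton)
    {c d : MbConfig N} {c' : P2pConfig N} {w : List (Act P A)}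
    (hinv : MbP2pInv N c c') (h : Steps (MbStep N) c w d) :
    ∃ d', Steps (P2pStep N) c' w d' ∧ MbP2pInv N d d' := by
  induction h generalizing c' with
  | nil c => exact ⟨c', Steps.nil c', hinv⟩
  | cons hstep _ ih =>
    obtain ⟨e', hstep', hinv'⟩ := step_fwd hWF hts hinv hstep
    obtain ⟨d', hsteps', hinv''⟩ := ih hinv'
    exact ⟨d', Steps.cons hstep' hsteps', hinv''⟩

lemma steps_bwd (hWF : N.WF) (hts : ∀ p, (senders N p).Subsingleton)
    {c : MbConfig N} {c' d' : P2pConfig N} {w : List (Act P A)}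
    (hinv : MbP2pInv N c c') (h : Steps (P2pStep N) c' w d') :
    ∃ d, Steps (MbStep N) c w d ∧ MbP2pInv N d d' := by
  induction h generalizing c with
  | nil c => exact ⟨c, Steps.nil c, hinv⟩
  | cons hstep _ ih =>
    obtain ⟨e, hstep', hinv'⟩ := step_bwd hWF hts hinv hstep
    obtain ⟨d, hsteps', hinv''⟩ := ih hinv'
    exact ⟨d, Steps.cons hstep' hsteps', hinv''⟩

end Bisim

/-- in a tree topology, mailboxes only ever contain messages from the unique
parent, and the mailbox and peer-to-peer semantics induce the same executions and traces. -/
theorem tree_mb_eq_p2p {P A : Type} [DecidableEq P] (N : Network P A) (hWF : N.WF)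
    (hfin : ∀ p, N.final p = Set.univ) (htree : TreeTopo N) :
    (∀ c : MbConfig N, MbReachable N c →
      ∀ p : P, ∀ m ∈ c.buf p, m.receiver = p ∧ m.sender ∈ senders N p) ∧
    MbExecs N = P2pExecs N ∧ MbTraces N = P2pTraces N := by
  obtain ⟨-, hts⟩ := htree
  constructor
  · rintro c ⟨w, hw⟩ p m hm
    obtain ⟨c', -, -, hbuf, -⟩ := steps_fwd hWF hts mbP2pInv_init hw
    exact hbuf p m hm
  · have hexec : MbExecs N = P2pExecs N := by
      ext w
      constructor
      · rintro ⟨c, hw, -⟩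
        obtain ⟨c', hw', -⟩ := steps_fwd hWF hts mbP2pInv_init hw
        exact ⟨c', hw', fun p => by simp [hfin p]⟩
      · rintro ⟨c', hw', -⟩
        obtain ⟨c, hw, -⟩ := steps_bwd hWF hts mbP2pInv_init hw'
        exact ⟨c, hw, fun p => by simp [hfin p]⟩
    exact ⟨hexec, by rw [MbTraces, P2pTraces, hexec]⟩
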